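/- arXiv:2503.22848 — 3 statements merged into one kernel-verified Lean document; each statement's English description precedes it below -/
import Mathlib

section
/- Let u, v ∈ ℂ with |u| ≤ 1, |v| ≤ 1, and let û, v̂ be approximations with |û| ≤ 1, |v̂| ≤ 1. Define ε(x̂) := 2^p |x̂ − x| for the corresponding exact value x. Let ŵ := ρ(û v̂), where ρ is round-towards-zero at precision p. Then ε(ŵ) < ε(û) + ε(v̂) + 2, where ŵ is an approximation of w := uv. -/
/-! Write `ρ(ûv̂) − uv = (ρ(ûv̂) − ûv̂) + (û − u)v̂ + u(v̂ − v)`. After scaling by `2^p`, the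
rounding error is below `1` in each coordinate, hence below `2` in norm, and `|v̂|, |u| ≤ 1`
bound the other two terms by `ε(û)` and `ε(v̂)`. -/

open Complex

noncomputable def rho0 (x : ℝ) : ℤ := if 0 ≤ x then ⌊x⌋ else ⌈x⌉

noncomputable def rho (p : ℕ) (z : ℂ) : ℂ :=
  (2 : ℂ) ^ (-(p : ℤ)) * ((rho0 ((2 : ℝ) ^ p * z.re) : ℂ) + (rho0 ((2 : ℝ) ^ p * z.im) : ℂ) * Complex.I)

theorem abs_rho0_sub_lt_one (x : ℝ) : |(rho0 x : ℝ) - x| < 1 := by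
  rw [abs_sub_lt_iff, rho0]
  split_ifs
  · constructor <;> linarith [Int.floor_le x, Int.lt_floor_add_one x]
  · constructor <;> linarith [Int.le_ceil x, Int.ceil_lt_add_one x]

theorem two_zpow_neg_eq_ofReal (p : ℕ) : (2 : ℂ) ^ (-(p : ℤ)) = (((2 : ℝ) ^ p)⁻¹ : ℝ) := by
  push_cast
  rw [zpow_neg, zpow_natCast]

theorem two_pow_mul_rho_sub_re (p : ℕ) (z : ℂ) :
    (2 : ℝ) ^ p * (rho p z - z).re = rho0 ((2 : ℝ) ^ p * z.re) - (2 : ℝ) ^ p * z.re := by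
  rw [rho, two_zpow_neg_eq_ofReal, sub_re, re_ofReal_mul, mul_sub, ← mul_assoc,
    mul_inv_cancel₀ (by positivity)]
  simp

theorem two_pow_mul_rho_sub_im (p : ℕ) (z : ℂ) :
    (2 : ℝ) ^ p * (rho p z - z).im = rho0 ((2 : ℝ) ^ p * z.im) - (2 : ℝ) ^ p * z.im := by
  rw [rho, two_zpow_neg_eq_ofReal, sub_im, im_ofReal_mul, mul_sub, ← mul_assoc,
    mul_inv_cancel₀ (by positivity)]
  simp

theorem two_pow_mul_norm_rho_sub_lt_two (p : ℕ) (z : ℂ) :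
    (2 : ℝ) ^ p * ‖rho p z - z‖ < 2 := by
  have h2p : (0 : ℝ) ≤ 2 ^ p := by positivity
  calc (2 : ℝ) ^ p * ‖rho p z - z‖
      ≤ |(2 : ℝ) ^ p * (rho p z - z).re| + |(2 : ℝ) ^ p * (rho p z - z).im| := by
        rw [abs_mul, abs_mul, abs_of_nonneg h2p, ← mul_add]
        exact mul_le_mul_of_nonneg_left (norm_le_abs_re_add_abs_im _) h2p
    _ < 1 + 1 := by
        rw [two_pow_mul_rho_sub_re, two_pow_mul_rho_sub_im]
        exact add_lt_add (abs_rho0_sub_lt_one _) (abs_rho0_sub_lt_one _)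
    _ = 2 := one_add_one_eq_two

theorem norm_mul_sub_mul_le_of_norm_le_one {R : Type*} [NonUnitalSeminormedRing R] {a b c d : R}
    (ha : ‖a‖ ≤ 1) (hd : ‖d‖ ≤ 1) : ‖c * d - a * b‖ ≤ ‖c - a‖ + ‖d - b‖ :=
  calc ‖c * d - a * b‖ = ‖(c - a) * d + a * (d - b)‖ := by noncomm_ring
    _ ≤ ‖c - a‖ * ‖d‖ + ‖a‖ * ‖d - b‖ := norm_add_le_of_le (norm_mul_le _ _) (norm_mul_le _ _)
    _ ≤ ‖c - a‖ + ‖d - b‖ := by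
        gcongr
        · exact mul_le_of_le_one_right (norm_nonneg _) hd
        · exact mul_le_of_le_one_left (norm_nonneg _) ha

theorem fixed_point_mul_error_general (p : ℕ) (u v uh vh : ℂ)
    (hu : ‖u‖ ≤ 1)
    (hvh : ‖vh‖ ≤ 1) :
    (2 : ℝ) ^ p * ‖rho p (uh * vh) - u * v‖ <
      (2 : ℝ) ^ p * ‖uh - u‖ + (2 : ℝ) ^ p * ‖vh - v‖ + 2 := by
  calc (2 : ℝ) ^ p * ‖rho p (uh * vh) - u * v‖
      ≤ (2 : ℝ) ^ p * ‖rho p (uh * vh) - uh * vh‖ + (2 : ℝ) ^ p * ‖uh * vh - u * v‖ := by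
        rw [← mul_add]
        gcongr
        exact norm_sub_le_norm_sub_add_norm_sub _ _ _
    _ ≤ (2 : ℝ) ^ p * ‖rho p (uh * vh) - uh * vh‖ + (2 : ℝ) ^ p * (‖uh - u‖ + ‖vh - v‖) := by
        gcongr
        exact norm_mul_sub_mul_le_of_norm_le_one hu hvh
    _ < 2 + (2 : ℝ) ^ p * (‖uh - u‖ + ‖vh - v‖) := by
        gcongr
        exact two_pow_mul_norm_rho_sub_lt_two p (uh * vh)
    _ = (2 : ℝ) ^ p * ‖uh - u‖ + (2 : ℝ) ^ p * ‖vh - v‖ + 2 := by ring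

/-- Fixed-point multiplication error bound: if ŵ = ρ(ûv̂), then
ε(ŵ) < ε(û) + ε(v̂) + 2 where ε(x̂) := 2^p |x̂ − x|. -/
theorem fixed_point_mul_error (p : ℕ) (hp : 1 ≤ p) (u v uh vh : ℂ)
    (hu : ‖u‖ ≤ 1) (hv : ‖v‖ ≤ 1)
    (huh : ‖uh‖ ≤ 1) (hvh : ‖vh‖ ≤ 1) :
    (2 : ℝ) ^ p * ‖rho p (uh * vh) - u * v‖ <
      (2 : ℝ) ^ p * ‖uh - u‖ + (2 : ℝ) ^ p * ‖vh - v‖ + 2 :=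
  fixed_point_mul_error_general p u v uh vh hu hvh
end

section
/- Let n ≥ 1 and p ≥ 1. Let F, G be vectors of complex numbers in the unit disc, F of length n and G of length 2n−1, with approximations F̂, Ĝ in the unit disc, and define H_t := (1/n) ∑_{s=0}^{n−1} F_s G_{(t+n−1)−s} for 0 ≤ t < n. Then |H_t| ≤ 1, and if Ĥ_t := ρ(W_t / (2^{2p} n)) where W_t := ∑_{s=0}^{n−1} (2^p F̂_s)(2^p Ĝ_{(t+n−1)−s}), then 2^p |Ĥ_t − H_t| ≤ √2 + max_s ε(F̂_s) + max_j ε(Ĝ_j) for all t. -/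
/-!
Write z := W_t / (2^{2p} n). Since the scalings by 2^p cancel, z is the mean of the products
F̂_s Ĝ_j, so Ĥ_t − H_t = (ρ(z) − z) + (z − H_t). Rounding each coordinate towards zero moves it by
at most 2^{-p}, so the first term has modulus at most √2·2^{-p}. The second is the mean of
F̂Ĝ − FG = F̂(Ĝ − G) + (F̂ − F)G, each of modulus at most (ε(F̂) + ε(Ĝ))·2^{-p} because |F̂|, |G| ≤ 1.
-/

open Complex Finset

lemma abs_rho0_sub_le (x : ℝ) : |(rho0 x : ℝ) - x| ≤ 1 := by
  unfold rho0
  split_ifs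
  · rw [abs_le]
    constructor <;> linarith [Int.floor_le x, Int.lt_floor_add_one x]
  · rw [abs_le]
    constructor <;> linarith [Int.le_ceil x, Int.ceil_lt_add_one x]

lemma norm_rho0_sub_le (w : ℂ) :
    ‖((rho0 w.re : ℂ) + (rho0 w.im : ℂ) * I) - w‖ ≤ √2 := by
  refine (norm_le_sqrt_two_mul_max _).trans (mul_le_of_le_one_right (by positivity) ?_)
  simpa using And.intro (abs_rho0_sub_le w.re) (abs_rho0_sub_le w.im)

lemma two_pow_mul_norm_rho_sub_le (p : ℕ) (z : ℂ) : (2 : ℝ) ^ p * ‖rho p z - z‖ ≤ √2 := by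
  set w : ℂ := ((2 ^ p : ℝ) : ℂ) * z with hwdef
  have hw : rho p z - z = ((2 : ℂ) ^ p)⁻¹ *
      (((rho0 w.re : ℂ) + (rho0 w.im : ℂ) * I) - w) := by
    rw [rho, hwdef, re_ofReal_mul, im_ofReal_mul, zpow_neg, zpow_natCast, mul_sub, ofReal_pow,
      ofReal_ofNat, inv_mul_cancel_left₀ (pow_ne_zero _ two_ne_zero)]
  rw [hw, norm_mul, norm_inv, norm_pow, Complex.norm_two, ← mul_assoc,
    mul_inv_cancel₀ (by positivity), one_mul]
  exact norm_rho0_sub_le w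

lemma norm_mul_sub_mul_le {R : Type*} [SeminormedRing R] {a a' b b' : R}
    (ha' : ‖a'‖ ≤ 1) (hb : ‖b‖ ≤ 1) : ‖a' * b' - a * b‖ ≤ ‖a' - a‖ + ‖b' - b‖ :=
  calc ‖a' * b' - a * b‖ = ‖a' * (b' - b) + (a' - a) * b‖ := by noncomm_ring
    _ ≤ ‖a'‖ * ‖b' - b‖ + ‖a' - a‖ * ‖b‖ :=
      (norm_add_le _ _).trans (add_le_add (norm_mul_le _ _) (norm_mul_le _ _))
    _ ≤ 1 * ‖b' - b‖ + ‖a' - a‖ * 1 := by gcongr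
    _ = ‖a' - a‖ + ‖b' - b‖ := by ring

lemma norm_mean_le {𝕜 ι : Type*} [RCLike 𝕜] {s : Finset ι} (hs : s.Nonempty) {f : ι → 𝕜}
    {C : ℝ} (hf : ∀ i ∈ s, ‖f i‖ ≤ C) : ‖(1 / (#s : 𝕜)) * ∑ i ∈ s, f i‖ ≤ C := by
  have hcard : (0 : ℝ) < #s := by exact_mod_cast hs.card_pos
  rw [norm_mul, norm_div, norm_one, RCLike.norm_natCast, one_div_mul_eq_div, div_le_iff₀' hcard]
  calc ‖∑ i ∈ s, f i‖ ≤ ∑ i ∈ s, ‖f i‖ := norm_sum_le _ _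
    _ ≤ ∑ _i ∈ s, C := sum_le_sum hf
    _ = #s * C := by rw [sum_const, nsmul_eq_mul]

lemma sum_mul_mul_div_sq_mul {K ι : Type*} [Field K] (s : Finset ι) (a b : ι → K) {c : K}
    (hc : c ≠ 0) (m : K) :
    (∑ i ∈ s, c * a i * (c * b i)) / (c ^ 2 * m) = 1 / m * ∑ i ∈ s, a i * b i := by
  have hsum : ∑ i ∈ s, c * a i * (c * b i) = c ^ 2 * ∑ i ∈ s, a i * b i := by
    rw [mul_sum]
    exact sum_congr rfl fun i _ => by ring
  rw [hsum, mul_div_mul_left _ _ (pow_ne_zero _ hc), one_div_mul_eq_div]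

theorem convolution_error_general (p n : ℕ) (hn : 1 ≤ n)
    (F G Fh Gh : ℕ → ℂ)
    (hF : ∀ s < n, ‖F s‖ ≤ 1)
    (hG : ∀ j < 2 * n - 1, ‖G j‖ ≤ 1)
    (hFh : ∀ s < n, ‖Fh s‖ ≤ 1)
    (eF eG : ℝ)
    (heF : ∀ s < n, (2 : ℝ) ^ p * ‖Fh s - F s‖ ≤ eF)
    (heG : ∀ j < 2 * n - 1, (2 : ℝ) ^ p * ‖Gh j - G j‖ ≤ eG)
    (H W Hh : ℕ → ℂ)
    (hH : ∀ t, H t = (1 / (n : ℂ)) * ∑ s ∈ Finset.range n, F s * G (t + n - 1 - s))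
    (hW : ∀ t, W t = ∑ s ∈ Finset.range n,
      ((2 : ℂ) ^ p * Fh s) * ((2 : ℂ) ^ p * Gh (t + n - 1 - s)))
    (hHh : ∀ t, Hh t = rho p (W t / ((2 : ℂ) ^ (2 * p) * n))) :
    ∀ t < n, ‖H t‖ ≤ 1 ∧
      (2 : ℝ) ^ p * ‖Hh t - H t‖ ≤ Real.sqrt 2 + eF + eG := by
  intro t ht
  have hrange : (range n).Nonempty := nonempty_range_iff.mpr (by omega)
  have hidx : ∀ s ∈ range n, s < n ∧ t + n - 1 - s < 2 * n - 1 := fun s hs => by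
    rw [mem_range] at hs; omega
  have hpos : (0 : ℝ) < 2 ^ p := by positivity
  have hHt : H t = 1 / (#(range n) : ℂ) * ∑ s ∈ range n, F s * G (t + n - 1 - s) := by
    rw [hH, card_range]
  set z := W t / ((2 : ℂ) ^ (2 * p) * n) with hzdef
  have hzH : z - H t = (1 / (#(range n) : ℂ)) *
      ∑ s ∈ range n, (Fh s * Gh (t + n - 1 - s) - F s * G (t + n - 1 - s)) := by
    rw [hzdef, hW, pow_mul', sum_mul_mul_div_sq_mul (K := ℂ) _ _ _ (pow_ne_zero p two_ne_zero),
      hHt, card_range, sum_sub_distrib, mul_sub]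
  have hterm : ∀ s ∈ range n,
      ‖Fh s * Gh (t + n - 1 - s) - F s * G (t + n - 1 - s)‖ ≤ (eF + eG) / 2 ^ p := by
    intro s hs
    obtain ⟨hs, hj⟩ := hidx s hs
    rw [le_div_iff₀' hpos]
    calc 2 ^ p * ‖Fh s * Gh (t + n - 1 - s) - F s * G (t + n - 1 - s)‖
        ≤ 2 ^ p * (‖Fh s - F s‖ + ‖Gh (t + n - 1 - s) - G (t + n - 1 - s)‖) := by
          gcongr; exact norm_mul_sub_mul_le (hFh s hs) (hG _ hj)
      _ ≤ eF + eG := by linarith [heF s hs, heG _ hj]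
  refine ⟨?_, ?_⟩
  · rw [hHt]
    exact norm_mean_le hrange fun s hs => by
      obtain ⟨hs, hj⟩ := hidx s hs
      exact (norm_mul_le _ _).trans (mul_le_one₀ (hF s hs) (norm_nonneg _) (hG _ hj))
  · calc (2 : ℝ) ^ p * ‖Hh t - H t‖ ≤ 2 ^ p * ‖Hh t - z‖ + 2 ^ p * ‖z - H t‖ := by
          rw [← mul_add]; gcongr; exact norm_sub_le_norm_sub_add_norm_sub _ _ _
      _ ≤ √2 + 2 ^ p * ((eF + eG) / 2 ^ p) := by
          gcongr
          · exact hHh t ▸ two_pow_mul_norm_rho_sub_le p z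
          · exact hzH ▸ norm_mean_le hrange hterm
      _ = √2 + eF + eG := by rw [mul_div_cancel₀ _ hpos.ne', add_assoc]

/-- Convolution error bound: |H_t| ≤ 1 and
2^p |Ĥ_t − H_t| ≤ √2 + (max error of F̂) + (max error of Ĝ). -/
theorem convolution_error (p n : ℕ) (hp : 1 ≤ p) (hn : 1 ≤ n)
    (F G Fh Gh : ℕ → ℂ)
    (hF : ∀ s < n, ‖F s‖ ≤ 1)
    (hG : ∀ j < 2 * n - 1, ‖G j‖ ≤ 1)
    (hFh : ∀ s < n, ‖Fh s‖ ≤ 1)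
    (hGh : ∀ j < 2 * n - 1, ‖Gh j‖ ≤ 1)
    (eF eG : ℝ)
    (heF : ∀ s < n, (2 : ℝ) ^ p * ‖Fh s - F s‖ ≤ eF)
    (heG : ∀ j < 2 * n - 1, (2 : ℝ) ^ p * ‖Gh j - G j‖ ≤ eG)
    (H W Hh : ℕ → ℂ)
    (hH : ∀ t, H t = (1 / (n : ℂ)) * ∑ s ∈ Finset.range n, F s * G (t + n - 1 - s))
    (hW : ∀ t, W t = ∑ s ∈ Finset.range n,
      ((2 : ℂ) ^ p * Fh s) * ((2 : ℂ) ^ p * Gh (t + n - 1 - s)))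
    (hHh : ∀ t, Hh t = rho p (W t / ((2 : ℂ) ^ (2 * p) * n))) :
    ∀ t < n, ‖H t‖ ≤ 1 ∧
      (2 : ℝ) ^ p * ‖Hh t - H t‖ ≤ Real.sqrt 2 + eF + eG :=
  convolution_error_general p n hn F G Fh Gh hF hG hFh eF eG heF heG H W Hh hH hW hHh
end

section
/- Let n₁, n₂ ≥ 2, let ζ_n := e^{2πi/n}, n := n₁n₂. For indices j = j₁n₂ + j₂ and k = k₂n₁ + k₁ with 0 ≤ j₁,k₁ < n₁ and 0 ≤ j₂,k₂ < n₂, one has ζ_n^{jk} = ζ_{n₁}^{j₁k₁} · ζ_n^{j₂k₁} · ζ_{n₂}^{j₂k₂}. Consequently, for any Y ∈ ℂⁿ, ∑_{k=0}^{n−1} ζ_n^{jk} Y_k = ∑_{k₁=0}^{n₁−1} ζ_{n₁}^{j₁k₁} ζ_n^{j₂k₁} ∑_{k₂=0}^{n₂−1} ζ_{n₂}^{j₂k₂} Y_{k₂n₁+k₁} (the Cooley–Tukey decomposition of the inverse DFT). -/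
open Complex Finset

lemma ct_key (n₁ n₂ : ℕ) (h₁ : 0 < n₁) (h₂ : 0 < n₂)
    (j₁ j₂ k₁ k₂ : ℕ) :
    Complex.exp (2 * Real.pi * Complex.I / (↑(n₁ * n₂))) ^ ((j₁ * n₂ + j₂) * (k₂ * n₁ + k₁)) =
      Complex.exp (2 * Real.pi * Complex.I / n₁) ^ (j₁ * k₁) *
      Complex.exp (2 * Real.pi * Complex.I / (↑(n₁ * n₂))) ^ (j₂ * k₁) *
      Complex.exp (2 * Real.pi * Complex.I / n₂) ^ (j₂ * k₂) := by
  have h1 : (n₁ : ℂ) ≠ 0 := Nat.cast_ne_zero.2 h₁.ne'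
  have h2 : (n₂ : ℂ) ≠ 0 := Nat.cast_ne_zero.2 h₂.ne'
  set z := Complex.exp (2 * Real.pi * Complex.I / (↑(n₁ * n₂))) with hz
  have hzn : z ^ (n₁ * n₂) = 1 := by
    rw [hz, ← Complex.exp_nat_mul]
    have : (↑(n₁ * n₂) : ℂ) * (2 * Real.pi * Complex.I / (↑(n₁ * n₂))) =
        2 * Real.pi * Complex.I := by
      push_cast
      field_simp
    rw [this, Complex.exp_two_pi_mul_I]
  have hz2 : z ^ n₂ = Complex.exp (2 * Real.pi * Complex.I / n₁) := by
    rw [hz, ← Complex.exp_nat_mul]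
    congr 1
    push_cast
    field_simp
  have hz1 : z ^ n₁ = Complex.exp (2 * Real.pi * Complex.I / n₂) := by
    rw [hz, ← Complex.exp_nat_mul]
    congr 1
    push_cast
    field_simp
  have hE : (j₁ * n₂ + j₂) * (k₂ * n₁ + k₁) =
      (n₁ * n₂) * (j₁ * k₂) + n₂ * (j₁ * k₁) + n₁ * (j₂ * k₂) + j₂ * k₁ := by ring
  rw [hE, pow_add, pow_add, pow_add, pow_mul z (n₁ * n₂), hzn, one_pow,
    pow_mul z n₂, hz2, pow_mul z n₁, hz1]
  ring

/-- Cooley–Tukey decomposition of the inverse DFT: with n = n₁n₂,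
j = j₁n₂ + j₂ and k = k₂n₁ + k₁, we have
ζ_n^{jk} = ζ_{n₁}^{j₁k₁} ζ_n^{j₂k₁} ζ_{n₂}^{j₂k₂}, and the corresponding
decomposition of the inverse DFT sum. -/
theorem cooley_tukey (n₁ n₂ : ℕ) (hn₁ : 2 ≤ n₁) (hn₂ : 2 ≤ n₂)
    (n : ℕ) (hn : n = n₁ * n₂)
    (ζ : ℕ → ℂ) (hζ : ∀ m, ζ m = Complex.exp (2 * Real.pi * Complex.I / m))
    (j₁ k₁ j₂ k₂ : ℕ) (hj₁ : j₁ < n₁) (hk₁ : k₁ < n₁) (hj₂ : j₂ < n₂) (hk₂ : k₂ < n₂)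
    (j k : ℕ) (hj : j = j₁ * n₂ + j₂) (hk : k = k₂ * n₁ + k₁) :
    ζ n ^ (j * k) = ζ n₁ ^ (j₁ * k₁) * ζ n ^ (j₂ * k₁) * ζ n₂ ^ (j₂ * k₂) ∧
    ∀ Y : ℕ → ℂ,
      ∑ k' ∈ Finset.range n, ζ n ^ (j * k') * Y k' =
        ∑ k₁' ∈ Finset.range n₁, ζ n₁ ^ (j₁ * k₁') * ζ n ^ (j₂ * k₁') *
          ∑ k₂' ∈ Finset.range n₂, ζ n₂ ^ (j₂ * k₂') * Y (k₂' * n₁ + k₁') := by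
  have h₁ : 0 < n₁ := lt_of_lt_of_le (by norm_num) hn₁
  have h₂ : 0 < n₂ := lt_of_lt_of_le (by norm_num) hn₂
  subst hn hj hk
  simp only [hζ]
  refine ⟨ct_key n₁ n₂ h₁ h₂ j₁ j₂ k₁ k₂, fun Y => ?_⟩
  have hre : ∀ F : ℕ → ℂ, ∑ k' ∈ Finset.range (n₁ * n₂), F k' =
      ∑ p ∈ (Finset.range n₁) ×ˢ (Finset.range n₂), F (p.2 * n₁ + p.1) := by
    intro F
    refine Finset.sum_nbij' (fun k' => (k' % n₁, k' / n₁)) (fun p => p.2 * n₁ + p.1)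
      ?_ ?_ ?_ ?_ ?_
    · intro k' hk'
      simp only [Finset.mem_range] at hk'
      simp only [Finset.mem_product, Finset.mem_range]
      exact ⟨Nat.mod_lt _ h₁, Nat.div_lt_iff_lt_mul h₁ |>.2 (by linarith [hk'])⟩
    · rintro ⟨a, b⟩ hp
      simp only [Finset.mem_product, Finset.mem_range] at hp
      simp only [Finset.mem_range]
      calc b * n₁ + a < b * n₁ + n₁ := by omega
        _ ≤ n₁ * n₂ := by nlinarith [hp.2]
    · intro k' _
      exact Nat.div_add_mod' k' n₁
    · rintro ⟨a, b⟩ hp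
      simp only [Finset.mem_product, Finset.mem_range] at hp
      simp only [Prod.mk.injEq]
      constructor
      · rw [Nat.add_comm, Nat.add_mul_mod_self_right]; exact Nat.mod_eq_of_lt hp.1
      · rw [Nat.add_comm, Nat.add_mul_div_right _ _ h₁, Nat.div_eq_of_lt hp.1]; omega
    · intro k' _
      rw [Nat.div_add_mod']
  rw [hre, Finset.sum_product]
  refine Finset.sum_congr rfl fun k₁' _ => ?_
  rw [Finset.mul_sum]
  refine Finset.sum_congr rfl fun k₂' _ => ?_
  rw [ct_key n₁ n₂ h₁ h₂ j₁ j₂ k₁' k₂']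
  ring
end
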